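/- arXiv:2209.12929 — 4 statements merged into one kernel-verified Lean document; each statement's English description precedes it below -/
import Mathlib

section
/- Let m ≥ 1 be an integer, h > 0 a real number, and D the line-lattice Dirac operator of size 2m. Then for all λ, μ ∈ ℂ^m, the commutators da_λ = [D, a_λ] and da_μ = [D, a_μ] commute: [D, a_λ]·[D, a_μ] = [D, a_μ]·[D, a_λ]. -/
open Matrix

/-- The off-diagonal block of the line-lattice Dirac operator:
`(D⁻)_{j,j+1} = 1` for `1 ≤ j ≤ m-1` (one-based), all other entries `0`. -/
noncomputable def Dminus (m : ℕ) : Matrix (Fin m) (Fin m) ℂ :=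
  fun i j => if (i : ℕ) + 1 = (j : ℕ) then 1 else 0

/-- The line-lattice Dirac operator `D = (i/h) • [[0, D⁻], [-(D⁻)ᵀ, 0]]` of size `2m`. -/
noncomputable def Dirac (m : ℕ) (h : ℝ) : Matrix (Fin m ⊕ Fin m) (Fin m ⊕ Fin m) ℂ :=
  (Complex.I / (h : ℂ)) • Matrix.fromBlocks 0 (Dminus m) (-(Dminus m)ᵀ) 0

/-- The diagonal matrix `a_λ = diag(λ₁, …, λ_m, λ₁, …, λ_m)`. -/
noncomputable def aDiag {m : ℕ} (lam : Fin m → ℂ) :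
    Matrix (Fin m ⊕ Fin m) (Fin m ⊕ Fin m) ℂ :=
  Matrix.diagonal (Sum.elim lam lam)

/-- The commutator `da_λ = [D, a_λ] = D a_λ - a_λ D`. -/
noncomputable def da (m : ℕ) (h : ℝ) (lam : Fin m → ℂ) :
    Matrix (Fin m ⊕ Fin m) (Fin m ⊕ Fin m) ℂ :=
  Dirac m h * aDiag lam - aDiag lam * Dirac m h


/-- The commutators `da_λ = [D, a_λ]` and `da_μ = [D, a_μ]` commute. -/
theorem da_mul_comm (m : ℕ) (hm : 1 ≤ m) (h : ℝ) (hh : 0 < h) (lam mu : Fin m → ℂ) :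
    da m h lam * da m h mu = da m h mu * da m h lam := by
  ext p q
  rw [Matrix.mul_apply, Matrix.mul_apply]
  refine Finset.sum_congr rfl fun k _ => ?_
  simp only [da, Dirac, aDiag, Dminus, Matrix.sub_apply, Matrix.mul_diagonal,
    Matrix.diagonal_mul, Matrix.smul_apply, smul_eq_mul]
  cases p <;> cases q <;> cases k <;>
    simp only [Matrix.fromBlocks_apply₁₁, Matrix.fromBlocks_apply₁₂,
      Matrix.fromBlocks_apply₂₁, Matrix.fromBlocks_apply₂₂, Sum.elim_inl, Sum.elim_inr,
      Matrix.zero_apply, Matrix.neg_apply, Matrix.transpose_apply, Matrix.of_apply, Dminus] <;>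
    (try rename_i i j k _) <;>
    (try split_ifs with h1 h2) <;>
    (try ring) <;>
    (have hij : i = j := Fin.ext (by omega); subst hij; ring)
end

section
/- Let m ≥ 1 be an integer, h > 0 a real number, and D the line-lattice Dirac operator of size 2m. Then for every λ ∈ ℂ^m, the matrix (da_λ)ᴴ · (da_λ) (conjugate-transpose times the matrix) is diagonal, with diagonal entry |λ_{j+1} − λ_j|²/h² in position j for 1 ≤ j ≤ m−1, entry 0 in positions m and m+1, and diagonal entry |λ_{j+1} − λ_j|²/h² in position m+j+1 for 1 ≤ j ≤ m−1. -/
open Matrix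

lemma da_apply (m : ℕ) (h : ℝ) (lam : Fin m → ℂ) (p q : Fin m ⊕ Fin m) :
    da m h lam p q = Dirac m h p q * (Sum.elim lam lam q - Sum.elim lam lam p) := by
  simp only [da, Matrix.sub_apply, aDiag, Matrix.mul_diagonal, Matrix.diagonal_mul]
  ring

lemma hcc (h : ℝ) : star (Complex.I/(h:ℂ)) * (Complex.I/(h:ℂ)) = 1/(h:ℂ)^2 := by
  simp only [Complex.star_def, map_div₀, Complex.conj_I, Complex.conj_ofReal]
  field_simp
  linear_combination (-((h:ℂ))⁻¹ ^ 2) * Complex.I_sq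

lemma star_self (z : ℂ) : star z * z = ((‖z‖^2 : ℝ) : ℂ) := by
  rw [Complex.star_def, mul_comm, Complex.mul_conj]
  norm_cast
  rw [Complex.normSq_eq_norm_sq]


/-- `(da_λ)ᴴ (da_λ)` is diagonal with entries `|λ_{j+1} - λ_j|²/h²` in position `j`
(`1 ≤ j ≤ m-1`), `0` in positions `m` and `m+1`, and `|λ_{j+1} - λ_j|²/h²` in position
`m+j+1` (`1 ≤ j ≤ m-1`).  In zero-based `ℂ^m ⊕ ℂ^m` indexing: the `inl j` entry is
`|λ_{j+1} - λ_j|²/h²` when `j + 1 < m` and `0` for `j = m-1`; the `inr k` entry is `0`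
for `k = 0` and `|λ_k - λ_{k-1}|²/h²` for `k ≥ 1`. -/
theorem conjTranspose_da_mul_da (m : ℕ) (hm : 1 ≤ m) (h : ℝ) (hh : 0 < h)
    (lam : Fin m → ℂ) :
    (da m h lam)ᴴ * da m h lam =
      Matrix.diagonal (Sum.elim
        (fun j : Fin m =>
          if hj : (j : ℕ) + 1 < m then
            ((‖lam ⟨(j : ℕ) + 1, hj⟩ - lam j‖ ^ 2 / h ^ 2 : ℝ) : ℂ)
          else 0)
        (fun k : Fin m =>
          if hk : 0 < (k : ℕ) then
            ((‖lam k - lam ⟨(k : ℕ) - 1, lt_of_le_of_lt (Nat.sub_le _ _) k.isLt⟩‖ ^ 2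
                / h ^ 2 : ℝ) : ℂ)
          else 0)) := by
  ext p q
  rw [Matrix.mul_apply]
  simp only [Matrix.conjTranspose_apply, da_apply]
  rw [Fintype.sum_sum_type]
  rcases p with j | j <;> rcases q with k | k
  · simp only [Dirac, Dminus, Matrix.smul_apply, Matrix.fromBlocks_apply₁₁,
      Matrix.fromBlocks_apply₂₁, Matrix.zero_apply, Matrix.neg_apply, Matrix.transpose_apply,
      Sum.elim_inl, Sum.elim_inr, smul_eq_mul, mul_zero, zero_mul, star_zero,
      Finset.sum_const_zero, zero_add]
    have hsum : (∑ x : Fin m,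
        star ((Complex.I / (h:ℂ) * -if (j:ℕ) + 1 = (x:ℕ) then 1 else 0) * (lam j - lam x)) *
          ((Complex.I / (h:ℂ) * -if (k:ℕ) + 1 = (x:ℕ) then 1 else 0) * (lam k - lam x)))
        = ∑ x : Fin m, if (j:ℕ) + 1 = (x:ℕ) ∧ (k:ℕ) + 1 = (x:ℕ) then
            star (lam j - lam x) * (lam k - lam x) / (h:ℂ)^2 else 0 := by
      refine Finset.sum_congr rfl fun x _ => ?_
      by_cases h1 : (j:ℕ) + 1 = (x:ℕ) <;> by_cases h2 : (k:ℕ) + 1 = (x:ℕ) <;>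
        simp only [h1, h2, if_true, if_false, and_self, and_true, and_false, ite_true, ite_false,
          mul_neg_one, neg_zero, mul_zero, zero_mul, star_zero, neg_mul, mul_neg, star_neg,
          star_mul', star_one, mul_one, one_mul, neg_neg, if_pos, true_and]
      · linear_combination (star (lam j - lam x) * (lam k - lam x)) * hcc h
    rw [hsum]
    rcases eq_or_ne j k with rfl | hjk
    · rw [Matrix.diagonal_apply_eq]
      simp only [Sum.elim_inl, and_self]
      by_cases hj : (j:ℕ) + 1 < m
      · rw [dif_pos hj, Finset.sum_eq_single (⟨(j:ℕ)+1, hj⟩ : Fin m)]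
        · rw [if_pos rfl, star_self, norm_sub_rev]
          push_cast
          ring
        · intro i _ hi
          rw [if_neg]
          intro h1
          exact hi (Fin.ext h1.symm)
        · simp
      · rw [dif_neg hj, Finset.sum_eq_zero]
        intro i _
        rw [if_neg]
        intro h1
        omega
    · rw [Matrix.diagonal_apply_ne _ (by simpa using hjk), Finset.sum_eq_zero]
      intro i _
      rw [if_neg]
      rintro ⟨h1, h2⟩
      exact hjk (Fin.ext (by omega))
  · simp [Dirac, Dminus, Matrix.diagonal_apply]
  · simp [Dirac, Dminus, Matrix.diagonal_apply]
  · simp only [Dirac, Dminus, Matrix.smul_apply, Matrix.fromBlocks_apply₁₂,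
      Matrix.fromBlocks_apply₂₂, Matrix.zero_apply, Matrix.neg_apply, Matrix.transpose_apply,
      Sum.elim_inl, Sum.elim_inr, smul_eq_mul, mul_zero, zero_mul, star_zero,
      Finset.sum_const_zero, add_zero]
    have hsum : (∑ x : Fin m,
        star ((Complex.I / (h:ℂ) * if (x:ℕ) + 1 = (j:ℕ) then 1 else 0) * (lam j - lam x)) *
          ((Complex.I / (h:ℂ) * if (x:ℕ) + 1 = (k:ℕ) then 1 else 0) * (lam k - lam x)))
        = ∑ x : Fin m, if (x:ℕ) + 1 = (j:ℕ) ∧ (x:ℕ) + 1 = (k:ℕ) then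
            star (lam j - lam x) * (lam k - lam x) / (h:ℂ)^2 else 0 := by
      refine Finset.sum_congr rfl fun x _ => ?_
      by_cases h1 : (x:ℕ) + 1 = (j:ℕ) <;> by_cases h2 : (x:ℕ) + 1 = (k:ℕ)
      · rw [if_pos h1, if_pos h2, if_pos ⟨h1, h2⟩]
        simp only [star_mul', star_one, mul_one]
        linear_combination (star (lam j - lam x) * (lam k - lam x)) * hcc h
      · rw [if_pos h1, if_neg h2, if_neg (by tauto)]
        simp
      · rw [if_neg h1, if_pos h2, if_neg (by tauto)]
        simp
      · rw [if_neg h1, if_neg h2, if_neg (by tauto)]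
        simp
    rw [hsum]
    rcases eq_or_ne j k with rfl | hjk
    · rw [Matrix.diagonal_apply_eq]
      simp only [Sum.elim_inr, and_self]
      by_cases hj : 0 < (j:ℕ)
      · rw [dif_pos hj, Finset.sum_eq_single
          (⟨(j:ℕ) - 1, lt_of_le_of_lt (Nat.sub_le _ _) j.isLt⟩ : Fin m)]
        · have hv : ((⟨(j:ℕ) - 1, lt_of_le_of_lt (Nat.sub_le _ _) j.isLt⟩ : Fin m) : ℕ)
              = (j:ℕ) - 1 := rfl
          rw [hv, if_pos (by omega), star_self]
          push_cast
          ring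
        · intro i _ hi
          rw [if_neg]
          intro h1
          exact hi (Fin.ext (show (i:ℕ) = (j:ℕ) - 1 by omega))
        · simp
      · rw [dif_neg hj, Finset.sum_eq_zero]
        intro i _
        rw [if_neg]
        intro h1
        omega
    · rw [Matrix.diagonal_apply_ne _ (by simpa using hjk), Finset.sum_eq_zero]
      intro i _
      rw [if_neg]
      rintro ⟨h1, h2⟩
      exact hjk (Fin.ext (by omega))
end

section
/- Let m ≥ 1 be an integer, h > 0 a real number, and D the line-lattice Dirac operator of size 2m. Then for every λ ∈ ℂ^m, the operator norm of da_λ = [D, a_λ], acting on ℂ^{2m} with its Euclidean (ℓ²) norm, equals (1/h) · max_{1 ≤ j ≤ m−1} |λ_{j+1} − λ_j| (equal to 0 when m = 1). -/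
open Matrix

noncomputable def Cmat (m : ℕ) (lam : Fin m → ℂ) : Matrix (Fin m) (Fin m) ℂ :=
  fun i j => if (i : ℕ) + 1 = (j : ℕ) then lam j - lam i else 0

lemma mulVec_Cmat {m : ℕ} (lam : Fin m → ℂ) (w : Fin m → ℂ) (a : Fin m) :
    (Cmat m lam *ᵥ w) a =
      if h : (a : ℕ) + 1 < m then (lam ⟨(a : ℕ) + 1, h⟩ - lam a) * w ⟨(a : ℕ) + 1, h⟩ else 0 := by
  unfold Matrix.mulVec dotProduct Cmat
  by_cases h : (a : ℕ) + 1 < m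
  · rw [dif_pos h, Finset.sum_eq_single (⟨(a : ℕ) + 1, h⟩ : Fin m)]
    · simp
    · intro b _ hb
      beta_reduce
      rw [if_neg, zero_mul]
      intro hc
      exact hb (Fin.ext hc.symm)
    · simp
  · rw [dif_neg h]
    apply Finset.sum_eq_zero
    intro b _
    beta_reduce
    rw [if_neg, zero_mul]
    intro hc
    exact h (hc ▸ b.isLt)

lemma mulVec_CmatT {m : ℕ} (lam : Fin m → ℂ) (w : Fin m → ℂ) (b : Fin m) :
    ((Cmat m lam)ᵀ *ᵥ w) b =
      if h : 0 < (b : ℕ) then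
        (lam b - lam ⟨(b : ℕ) - 1, Nat.lt_of_le_of_lt (Nat.pred_le _) b.isLt⟩) *
          w ⟨(b : ℕ) - 1, Nat.lt_of_le_of_lt (Nat.pred_le _) b.isLt⟩
      else 0 := by
  unfold Matrix.mulVec dotProduct Cmat Matrix.transpose
  simp only [Matrix.of_apply]
  by_cases h : 0 < (b : ℕ)
  · rw [dif_pos h, Finset.sum_eq_single (⟨(b : ℕ) - 1, Nat.lt_of_le_of_lt (Nat.pred_le _) b.isLt⟩ : Fin m)]
    · rw [if_pos]
      exact Nat.succ_pred_eq_of_pos h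
    · intro a _ ha
      rw [if_neg, zero_mul]
      intro hc
      apply ha
      apply Fin.ext
      simp only []
      omega
    · simp
  · rw [dif_neg h]
    apply Finset.sum_eq_zero
    intro a _
    rw [if_neg, zero_mul]
    omega

lemma sum_succ_le {m : ℕ} (f : Fin m → ℝ) (hf : ∀ b, 0 ≤ f b) :
    (∑ b : Fin m, if h : (b : ℕ) + 1 < m then f ⟨(b : ℕ) + 1, h⟩ else 0) ≤ ∑ b, f b := by
  set F : ℕ → ℝ := fun n => if h : n < m then f ⟨n, h⟩ else 0 with hF
  have hFnn : ∀ n, 0 ≤ F n := by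
    intro n; rw [hF]; dsimp only; split
    · exact hf _
    · exact le_refl 0
  have h1 : (∑ b : Fin m, if h : (b : ℕ) + 1 < m then f ⟨(b : ℕ) + 1, h⟩ else 0)
      = ∑ n ∈ Finset.range m, F (n + 1) := by
    rw [← Fin.sum_univ_eq_sum_range (fun n => F (n + 1)) m]
  have h2 : (∑ b : Fin m, f b) = ∑ n ∈ Finset.range m, F n := by
    rw [← Fin.sum_univ_eq_sum_range F m]
    refine Finset.sum_congr rfl fun b _ => ?_
    rw [hF]; dsimp only; rw [dif_pos b.isLt]
  rw [h1, h2]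
  calc ∑ n ∈ Finset.range m, F (n + 1)
      ≤ (∑ n ∈ Finset.range m, F (n + 1)) + F 0 := le_add_of_nonneg_right (hFnn 0)
    _ = ∑ n ∈ Finset.range (m + 1), F n := (Finset.sum_range_succ' F m).symm
    _ = (∑ n ∈ Finset.range m, F n) + F m := Finset.sum_range_succ F m
    _ = ∑ n ∈ Finset.range m, F n := by
        rw [show F m = 0 from dif_neg (lt_irrefl m), add_zero]

lemma sum_pred_le {m : ℕ} (f : Fin m → ℝ) (hf : ∀ b, 0 ≤ f b) :
    (∑ b : Fin m, if h : 0 < (b : ℕ) then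
        f ⟨(b : ℕ) - 1, Nat.lt_of_le_of_lt (Nat.pred_le _) b.isLt⟩ else 0) ≤ ∑ b, f b := by
  match m with
  | 0 => simp
  | k + 1 =>
  set F : ℕ → ℝ := fun n => if h : n < k + 1 then f ⟨n, h⟩ else 0 with hF
  have hFnn : ∀ n, 0 ≤ F n := by
    intro n; rw [hF]; dsimp only; split
    · exact hf _
    · exact le_refl 0
  set G : ℕ → ℝ := fun n => if h : 0 < n then F (n - 1) else 0 with hG
  have h1 : (∑ b : Fin (k + 1), if h : 0 < (b : ℕ) then
        f ⟨(b : ℕ) - 1, Nat.lt_of_le_of_lt (Nat.pred_le _) b.isLt⟩ else 0)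
      = ∑ n ∈ Finset.range (k + 1), G n := by
    rw [← Fin.sum_univ_eq_sum_range G (k + 1)]
    refine Finset.sum_congr rfl fun b _ => ?_
    rw [hG]; dsimp only
    by_cases hb : 0 < (b : ℕ)
    · rw [dif_pos hb, dif_pos hb, hF]; dsimp only
      rw [dif_pos (show (b : ℕ) - 1 < k + 1 from Nat.lt_of_le_of_lt (Nat.sub_le _ _) b.isLt)]
    · rw [dif_neg hb, dif_neg hb]
  have h2 : (∑ b : Fin (k + 1), f b) = ∑ n ∈ Finset.range (k + 1), F n := by
    rw [← Fin.sum_univ_eq_sum_range F (k + 1)]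
    refine Finset.sum_congr rfl fun b _ => ?_
    rw [hF]; dsimp only; rw [dif_pos b.isLt]
  rw [h1, h2]
  calc ∑ n ∈ Finset.range (k + 1), G n
      = (∑ n ∈ Finset.range k, G (n + 1)) + G 0 := Finset.sum_range_succ' G k
    _ = ∑ n ∈ Finset.range k, F n := by
        rw [show G 0 = 0 from dif_neg (lt_irrefl 0), add_zero]
        refine Finset.sum_congr rfl fun n _ => ?_
        rw [hG]; dsimp only; rw [dif_pos (Nat.succ_pos n)]; norm_num
    _ ≤ (∑ n ∈ Finset.range k, F n) + F k := le_add_of_nonneg_right (hFnn k)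
    _ = ∑ n ∈ Finset.range (k + 1), F n := (Finset.sum_range_succ F k).symm

lemma coord_le_norm {ι : Type*} [Fintype ι] (y : EuclideanSpace ℂ ι) (i : ι) : ‖y i‖ ≤ ‖y‖ := by
  rw [EuclideanSpace.norm_eq]
  calc ‖y i‖ = Real.sqrt (‖y i‖ ^ 2) := (Real.sqrt_sq (norm_nonneg _)).symm
    _ ≤ _ := Real.sqrt_le_sqrt <|
        Finset.single_le_sum (f := fun j => ‖y j‖ ^ 2) (fun j _ => sq_nonneg _) (Finset.mem_univ i)

lemma key1 {m : ℕ} (lam : Fin m → ℂ) (s : ℝ) (hs0 : 0 ≤ s)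
    (hlam : ∀ (j : Fin m) (hj : (j : ℕ) + 1 < m), ‖lam ⟨(j : ℕ) + 1, hj⟩ - lam j‖ ≤ s)
    (v : Fin m → ℂ) :
    ∑ a : Fin m, ‖(Cmat m lam *ᵥ v) a‖ ^ 2 ≤ s ^ 2 * ∑ a : Fin m, ‖v a‖ ^ 2 := by
  calc ∑ a : Fin m, ‖(Cmat m lam *ᵥ v) a‖ ^ 2
      ≤ ∑ a : Fin m, s ^ 2 * (if h : (a : ℕ) + 1 < m then ‖v ⟨(a : ℕ) + 1, h⟩‖ ^ 2 else 0) := by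
        refine Finset.sum_le_sum fun a _ => ?_
        rw [mulVec_Cmat]
        split_ifs with h
        · rw [norm_mul, mul_pow]
          exact mul_le_mul_of_nonneg_right
            (pow_le_pow_left₀ (norm_nonneg _) (hlam a h) 2) (sq_nonneg _)
        · simp
    _ = s ^ 2 * ∑ a : Fin m, (if h : (a : ℕ) + 1 < m then ‖v ⟨(a : ℕ) + 1, h⟩‖ ^ 2 else 0) :=
        by rw [Finset.mul_sum]
    _ ≤ s ^ 2 * ∑ a : Fin m, ‖v a‖ ^ 2 :=
        mul_le_mul_of_nonneg_left (sum_succ_le (fun b => ‖v b‖ ^ 2) (fun b => sq_nonneg _)) (sq_nonneg s)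

lemma key2 {m : ℕ} (lam : Fin m → ℂ) (s : ℝ) (hs0 : 0 ≤ s)
    (hlam : ∀ (j : Fin m) (hj : (j : ℕ) + 1 < m), ‖lam ⟨(j : ℕ) + 1, hj⟩ - lam j‖ ≤ s)
    (v : Fin m → ℂ) :
    ∑ a : Fin m, ‖((Cmat m lam)ᵀ *ᵥ v) a‖ ^ 2 ≤ s ^ 2 * ∑ a : Fin m, ‖v a‖ ^ 2 := by
  calc ∑ a : Fin m, ‖((Cmat m lam)ᵀ *ᵥ v) a‖ ^ 2
      ≤ ∑ b : Fin m, s ^ 2 * (if h : 0 < (b : ℕ) then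
          ‖v ⟨(b : ℕ) - 1, Nat.lt_of_le_of_lt (Nat.pred_le _) b.isLt⟩‖ ^ 2 else 0) := by
        refine Finset.sum_le_sum fun b _ => ?_
        rw [mulVec_CmatT]
        split_ifs with h
        · rw [norm_mul, mul_pow]
          refine mul_le_mul_of_nonneg_right ?_ (sq_nonneg _)
          refine pow_le_pow_left₀ (norm_nonneg _) ?_ 2
          have hj : ((⟨(b : ℕ) - 1, Nat.lt_of_le_of_lt (Nat.pred_le _) b.isLt⟩ : Fin m) : ℕ) + 1 < m := by
            simp only []
            omega
          have hb : (⟨((⟨(b : ℕ) - 1, Nat.lt_of_le_of_lt (Nat.pred_le _) b.isLt⟩ : Fin m) : ℕ) + 1, hj⟩ : Fin m) = b := by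
            apply Fin.ext
            simp only []
            omega
          have := hlam ⟨(b : ℕ) - 1, Nat.lt_of_le_of_lt (Nat.pred_le _) b.isLt⟩ hj
          rwa [hb] at this
        · simp
    _ = s ^ 2 * ∑ b : Fin m, (if h : 0 < (b : ℕ) then
          ‖v ⟨(b : ℕ) - 1, Nat.lt_of_le_of_lt (Nat.pred_le _) b.isLt⟩‖ ^ 2 else 0) :=
        by rw [Finset.mul_sum]
    _ ≤ s ^ 2 * ∑ a : Fin m, ‖v a‖ ^ 2 :=
        mul_le_mul_of_nonneg_left (sum_pred_le (fun b => ‖v b‖ ^ 2) (fun b => sq_nonneg _)) (sq_nonneg s)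

lemma mulVec_M_inl {m : ℕ} (lam : Fin m → ℂ) (x : (Fin m ⊕ Fin m) → ℂ) (a : Fin m) :
    (fromBlocks 0 (Cmat m lam) (Cmat m lam)ᵀ 0 *ᵥ x) (Sum.inl a)
      = (Cmat m lam *ᵥ fun b => x (Sum.inr b)) a := by
  rw [show x = Sum.elim (fun b => x (Sum.inl b)) (fun b => x (Sum.inr b)) from
    funext fun k => by cases k <;> rfl, fromBlocks_mulVec]
  simp [Matrix.zero_mulVec]

lemma mulVec_M_inr {m : ℕ} (lam : Fin m → ℂ) (x : (Fin m ⊕ Fin m) → ℂ) (a : Fin m) :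
    (fromBlocks 0 (Cmat m lam) (Cmat m lam)ᵀ 0 *ᵥ x) (Sum.inr a)
      = ((Cmat m lam)ᵀ *ᵥ fun b => x (Sum.inl b)) a := by
  rw [show x = Sum.elim (fun b => x (Sum.inl b)) (fun b => x (Sum.inr b)) from
    funext fun k => by cases k <;> rfl, fromBlocks_mulVec]
  simp [Matrix.zero_mulVec]
lemma da_eq (m : ℕ) (h : ℝ) (lam : Fin m → ℂ) :
    da m h lam = (Complex.I / (h : ℂ)) • fromBlocks 0 (Cmat m lam) (Cmat m lam)ᵀ 0 := by
  ext i j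
  rcases i with a | a <;> rcases j with b | b <;>
    simp only [da, Dirac, aDiag, Dminus, Cmat, Matrix.sub_apply, Matrix.mul_diagonal,
      Matrix.diagonal_mul, Matrix.smul_apply, Matrix.fromBlocks_apply₁₁,
      Matrix.fromBlocks_apply₁₂, Matrix.fromBlocks_apply₂₁, Matrix.fromBlocks_apply₂₂,
      Matrix.transpose_apply, Matrix.neg_apply, Matrix.zero_apply, Sum.elim_inl, Sum.elim_inr,
      smul_eq_mul, Matrix.of_apply] <;>
    first
    | (split_ifs <;> ring)
    | ring


/-- The operator norm of `da_λ = [D, a_λ]` on Euclidean space `ℂ^{2m}` equals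
`(1/h) · max_{1 ≤ j ≤ m-1} |λ_{j+1} - λ_j|` (the supremum being `0` when `m = 1`). -/
theorem opNorm_da (m : ℕ) (hm : 1 ≤ m) (h : ℝ) (hh : 0 < h) (lam : Fin m → ℂ) :
    ‖LinearMap.toContinuousLinearMap (Matrix.toEuclideanLin (da m h lam))‖ =
      (1 / h) * ⨆ (j : Fin m), ⨆ (hj : (j : ℕ) + 1 < m),
        ‖lam ⟨(j : ℕ) + 1, hj⟩ - lam j‖ := by
  classical
  haveI : Nonempty (Fin m) := ⟨⟨0, hm⟩⟩
  set c : Fin m → ℝ := fun j =>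
    if hj : (j : ℕ) + 1 < m then ‖lam ⟨(j : ℕ) + 1, hj⟩ - lam j‖ else 0 with hc
  have hcnn : ∀ j, 0 ≤ c j := by
    intro j; rw [hc]; dsimp only; split
    · exact norm_nonneg _
    · exact le_refl 0
  have hrange : (⨆ (j : Fin m), ⨆ (hj : (j : ℕ) + 1 < m), ‖lam ⟨(j : ℕ) + 1, hj⟩ - lam j‖)
      = ⨆ j, c j := by
    refine iSup_congr fun j => ?_
    by_cases hj : (j : ℕ) + 1 < m
    · rw [ciSup_pos hj, hc]; dsimp only; rw [dif_pos hj]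
    · haveI := isEmpty_Prop.mpr hj
      rw [Real.iSup_of_isEmpty, hc]; dsimp only; rw [dif_neg hj]
  set s := ⨆ j, c j with hs
  have hbdd : BddAbove (Set.range c) := Set.Finite.bddAbove (Set.finite_range c)
  have hcs : ∀ j, c j ≤ s := fun j => le_ciSup hbdd j
  have hs0 : 0 ≤ s := le_trans (hcnn ⟨0, hm⟩) (hcs ⟨0, hm⟩)
  have hlam : ∀ (j : Fin m) (hj : (j : ℕ) + 1 < m), ‖lam ⟨(j : ℕ) + 1, hj⟩ - lam j‖ ≤ s := by
    intro j hj
    have := hcs j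
    rw [hc] at this; dsimp only at this; rwa [dif_pos hj] at this
  set M : Matrix (Fin m ⊕ Fin m) (Fin m ⊕ Fin m) ℂ :=
    fromBlocks 0 (Cmat m lam) (Cmat m lam)ᵀ 0 with hM
  set L : EuclideanSpace ℂ (Fin m ⊕ Fin m) →L[ℂ] EuclideanSpace ℂ (Fin m ⊕ Fin m) :=
    LinearMap.toContinuousLinearMap (Matrix.toEuclideanLin M) with hL
  have happ : ∀ (x : EuclideanSpace ℂ (Fin m ⊕ Fin m)) (i : Fin m ⊕ Fin m),
      L x i = (M *ᵥ (fun k => x k)) i := fun x i => rfl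
  -- upper bound
  have hA : ∀ x : EuclideanSpace ℂ (Fin m ⊕ Fin m), ‖L x‖ ≤ s * ‖x‖ := by
    intro x
    have hx2 : ‖x‖ ^ 2 = ∑ i, ‖x i‖ ^ 2 := by
      rw [EuclideanSpace.norm_eq, Real.sq_sqrt]
      exact Finset.sum_nonneg fun i _ => sq_nonneg _
    have hsum : ∑ i, ‖(L x) i‖ ^ 2 ≤ s ^ 2 * ‖x‖ ^ 2 := by
      rw [hx2]
      rw [show (∑ i, ‖(L x) i‖ ^ 2)
          = (∑ a : Fin m, ‖(L x) (Sum.inl a)‖ ^ 2) + ∑ a : Fin m, ‖(L x) (Sum.inr a)‖ ^ 2 from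
        Fintype.sum_sum_type _]
      rw [show (∑ i, ‖x i‖ ^ 2)
          = (∑ a : Fin m, ‖x (Sum.inl a)‖ ^ 2) + ∑ a : Fin m, ‖x (Sum.inr a)‖ ^ 2 from
        Fintype.sum_sum_type _]
      have e1 : ∀ a : Fin m, (L x) (Sum.inl a) = (Cmat m lam *ᵥ fun b => x (Sum.inr b)) a := by
        intro a; rw [happ, hM, mulVec_M_inl]
      have e2 : ∀ a : Fin m, (L x) (Sum.inr a) = ((Cmat m lam)ᵀ *ᵥ fun b => x (Sum.inl b)) a := by
        intro a; rw [happ, hM, mulVec_M_inr]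
      calc (∑ a : Fin m, ‖(L x) (Sum.inl a)‖ ^ 2) + ∑ a : Fin m, ‖(L x) (Sum.inr a)‖ ^ 2
          = (∑ a : Fin m, ‖(Cmat m lam *ᵥ fun b => x (Sum.inr b)) a‖ ^ 2)
            + ∑ a : Fin m, ‖((Cmat m lam)ᵀ *ᵥ fun b => x (Sum.inl b)) a‖ ^ 2 := by
            simp only [e1, e2]
        _ ≤ s ^ 2 * (∑ a : Fin m, ‖x (Sum.inr a)‖ ^ 2)
            + s ^ 2 * ∑ a : Fin m, ‖x (Sum.inl a)‖ ^ 2 :=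
            add_le_add (key1 lam s hs0 hlam _) (key2 lam s hs0 hlam _)
        _ = s ^ 2 * ((∑ a : Fin m, ‖x (Sum.inl a)‖ ^ 2) + ∑ a : Fin m, ‖x (Sum.inr a)‖ ^ 2) := by
            ring
    calc ‖L x‖ = Real.sqrt (∑ i, ‖(L x) i‖ ^ 2) := EuclideanSpace.norm_eq _
      _ ≤ Real.sqrt (s ^ 2 * ‖x‖ ^ 2) := Real.sqrt_le_sqrt hsum
      _ = s * ‖x‖ := by
          rw [← mul_pow, Real.sqrt_sq (mul_nonneg hs0 (norm_nonneg _))]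
  -- lower bound
  have hB : s ≤ ‖L‖ := by
    rw [hs]
    refine ciSup_le fun j => ?_
    by_cases hj : (j : ℕ) + 1 < m
    · set e : EuclideanSpace ℂ (Fin m ⊕ Fin m) :=
        EuclideanSpace.single (Sum.inr (⟨(j : ℕ) + 1, hj⟩ : Fin m)) (1 : ℂ) with he
      have hen : ‖e‖ = 1 := by rw [he, EuclideanSpace.norm_single, norm_one]
      have hLe : (L e) (Sum.inl j) = lam ⟨(j : ℕ) + 1, hj⟩ - lam j := by
        rw [happ, hM, mulVec_M_inl, mulVec_Cmat, dif_pos hj]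
        have : e (Sum.inr (⟨(j : ℕ) + 1, hj⟩ : Fin m)) = 1 := by
          rw [he, EuclideanSpace.single_apply, if_pos rfl]
        rw [this, mul_one]
      have hcj : c j = ‖(L e) (Sum.inl j)‖ := by
        rw [hLe, hc]; dsimp only; rw [dif_pos hj]
      calc c j = ‖(L e) (Sum.inl j)‖ := hcj
        _ ≤ ‖L e‖ := coord_le_norm _ _
        _ ≤ ‖L‖ * ‖e‖ := L.le_opNorm e
        _ = ‖L‖ := by rw [hen, mul_one]
    · have : c j = 0 := by rw [hc]; dsimp only; rw [dif_neg hj]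
      rw [this]
      exact norm_nonneg L
  have hLs : ‖L‖ = s := le_antisymm (L.opNorm_le_bound hs0 hA) hB
  have hIh : ‖(Complex.I / (h : ℂ))‖ = 1 / h := by
    rw [norm_div, Complex.norm_I, Complex.norm_real, Real.norm_of_nonneg hh.le]
  rw [da_eq, _root_.map_smul, _root_.map_smul, ← hM, ← hL, hrange]
  have hns : ‖(Complex.I / (h : ℂ)) • L‖ = ‖Complex.I / (h : ℂ)‖ * ‖L‖ :=
    norm_smul (α := ℂ)
      (β := EuclideanSpace ℂ (Fin m ⊕ Fin m) →L[ℂ] EuclideanSpace ℂ (Fin m ⊕ Fin m)) _ L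
  rw [hns, hIh, hLs]
end

section
/- Let m ≥ 2 be an integer, h > 0 a real number, and ω = (ω_1, …, ω_{m−1}) ∈ ℂ^{m−1} with ω_j ≠ 0 for all j. Let D⁻_ω ∈ M_m(ℂ) have entries (D⁻_ω)_{j,j+1} = ω_j for 1 ≤ j ≤ m−1 and 0 elsewhere, and set D_ω = (i/h)·[[0, D⁻_ω], [−(D⁻_ω)ᵀ, 0]]. Then the set {[D_ω, a_λ] : λ ∈ ℂ^m} equals the ℂ-linear span of the matrices {E_{j, m+j+1} + E_{m+j+1, j} : 1 ≤ j ≤ m−1}; in particular, this set is a linear subspace of M_{2m}(ℂ) independent of the choice of the nonzero weights ω. -/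
open Matrix

/-- The weighted shift block `D⁻_ω` with `(D⁻_ω)_{j,j+1} = ω_j` (one-based),
all other entries `0`.  Weights are indexed by `j : Fin m` with `j + 1 < m`. -/
noncomputable def DminusW (m : ℕ) (w : Fin m → ℂ) : Matrix (Fin m) (Fin m) ℂ :=
  fun i j => if (i : ℕ) + 1 = (j : ℕ) then w i else 0

/-- The weighted Dirac operator `D_ω = (i/h)·[[0, D⁻_ω], [-(D⁻_ω)ᵀ, 0]]`. -/
noncomputable def DiracW (m : ℕ) (h : ℝ) (w : Fin m → ℂ) :
    Matrix (Fin m ⊕ Fin m) (Fin m ⊕ Fin m) ℂ :=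
  (Complex.I / (h : ℂ)) • Matrix.fromBlocks 0 (DminusW m w) (-(DminusW m w)ᵀ) 0

noncomputable def Sgen (m : ℕ) (j : Fin m) : Matrix (Fin m ⊕ Fin m) (Fin m ⊕ Fin m) ℂ :=
  if hj : (j : ℕ) + 1 < m then
    Matrix.single (Sum.inl j) (Sum.inr ⟨(j : ℕ) + 1, hj⟩) (1 : ℂ)
      + Matrix.single (Sum.inr ⟨(j : ℕ) + 1, hj⟩) (Sum.inl j) (1 : ℂ)
  else 0

lemma comm_apply (m : ℕ) (h : ℝ) (w : Fin m → ℂ) (lam : Fin m → ℂ)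
    (p q : Fin m ⊕ Fin m) :
    (DiracW m h w * aDiag lam - aDiag lam * DiracW m h w) p q
      = DiracW m h w p q * (Sum.elim lam lam q - Sum.elim lam lam p) := by
  simp only [Matrix.sub_apply, aDiag, Matrix.mul_diagonal, Matrix.diagonal_mul]
  ring

lemma comm_eq_sum (m : ℕ) (h : ℝ) (w : Fin m → ℂ) (lam : Fin m → ℂ) :
    DiracW m h w * aDiag lam - aDiag lam * DiracW m h w
      = ∑ j : Fin m,
          (if hj : (j : ℕ) + 1 < m then
            Complex.I / (h : ℂ) * w j * (lam ⟨(j : ℕ) + 1, hj⟩ - lam j) else 0) • Sgen m j := by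
  ext p q
  rw [comm_apply, Matrix.sum_apply]
  simp only [Matrix.smul_apply, smul_eq_mul]
  cases p with
  | inl a =>
    cases q with
    | inl b =>
      simp [DiracW, Sgen, Matrix.single, Matrix.add_apply,
        apply_dite (fun M : Matrix (Fin m ⊕ Fin m) (Fin m ⊕ Fin m) ℂ => M (Sum.inl a) (Sum.inl b))]
    | inr b =>
      rw [Finset.sum_eq_single a]
      · by_cases ha : (a : ℕ) + 1 < m
        · simp only [Sgen, ha, dif_pos, Matrix.add_apply, Matrix.single, of_apply]
          by_cases hb : b = ⟨(a : ℕ) + 1, ha⟩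
          · subst hb
            simp [DiracW, DminusW]
            try ring
          · have hb' : (a : ℕ) + 1 ≠ (b : ℕ) := fun hc => hb (Fin.ext hc.symm)
            have hb2 : ¬ ((⟨(a : ℕ) + 1, ha⟩ : Fin m) = b) := fun hc => hb hc.symm
            simp [DiracW, DminusW, hb', hb2]
        · have hb' : (a : ℕ) + 1 ≠ (b : ℕ) := fun hc => ha (hc ▸ b.isLt)
          simp [DiracW, DminusW, hb', Sgen, ha]
      · intro j _ hja
        simp only [Sgen]
        split
        · simp [Matrix.single, Matrix.add_apply, hja]
        · simp
      · intro hc; exact absurd (Finset.mem_univ a) hc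
  | inr a =>
    cases q with
    | inr b =>
      simp [DiracW, Sgen, Matrix.single, Matrix.add_apply,
        apply_dite (fun M : Matrix (Fin m ⊕ Fin m) (Fin m ⊕ Fin m) ℂ => M (Sum.inr a) (Sum.inr b))]
    | inl b =>
      rw [Finset.sum_eq_single b]
      · by_cases hb : (b : ℕ) + 1 < m
        · simp only [Sgen, hb, dif_pos, Matrix.add_apply, Matrix.single, of_apply]
          by_cases hab : a = ⟨(b : ℕ) + 1, hb⟩
          · subst hab
            simp [DiracW, DminusW]
            try ring
          · have ha' : (b : ℕ) + 1 ≠ (a : ℕ) := fun hc => hab (Fin.ext hc.symm)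
            have ha2 : ¬ ((⟨(b : ℕ) + 1, hb⟩ : Fin m) = a) := fun hc => hab hc.symm
            simp [DiracW, DminusW, ha', ha2]
        · have ha' : (b : ℕ) + 1 ≠ (a : ℕ) := fun hc => hb (hc ▸ a.isLt)
          simp [DiracW, DminusW, ha', Sgen, hb]
      · intro j _ hjb
        simp only [Sgen]
        split
        · simp [Matrix.single, Matrix.add_apply, hjb]
        · simp
      · intro hc; exact absurd (Finset.mem_univ b) hc

lemma aDiag_add {m : ℕ} (x y : Fin m → ℂ) : aDiag (x + y) = aDiag x + aDiag y := by
  unfold aDiag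
  have he : Sum.elim (x + y) (x + y) = Sum.elim x x + Sum.elim y y :=
    funext fun p => by cases p <;> rfl
  rw [he]
  exact (Matrix.diagonal_add _ _).symm

lemma aDiag_smul {m : ℕ} (c : ℂ) (x : Fin m → ℂ) : aDiag (c • x) = c • aDiag x := by
  unfold aDiag
  have he : Sum.elim (c • x) (c • x) = c • Sum.elim x x :=
    funext fun p => by cases p <;> rfl
  rw [he]
  exact Matrix.diagonal_smul _ _

lemma aDiag_zero {m : ℕ} : aDiag (0 : Fin m → ℂ) = 0 := by
  unfold aDiag
  have : (Sum.elim (0 : Fin m → ℂ) (0 : Fin m → ℂ) : Fin m ⊕ Fin m → ℂ) = 0 := by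
    funext p; cases p <;> rfl
  rw [this]
  exact Matrix.diagonal_zero

lemma gen_eq_comm (m : ℕ) (h : ℝ) (hh : 0 < h) (w : Fin m → ℂ)
    (hw : ∀ j : Fin m, (j : ℕ) + 1 < m → w j ≠ 0) (j : ℕ) (hj : j + 1 < m) :
    ∃ lam : Fin m → ℂ,
      Matrix.single (Sum.inl ⟨j, Nat.lt_of_succ_lt hj⟩) (Sum.inr ⟨j + 1, hj⟩) (1 : ℂ)
        + Matrix.single (Sum.inr ⟨j + 1, hj⟩) (Sum.inl ⟨j, Nat.lt_of_succ_lt hj⟩) (1 : ℂ)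
      = DiracW m h w * aDiag lam - aDiag lam * DiracW m h w := by
  set jf : Fin m := ⟨j, Nat.lt_of_succ_lt hj⟩ with hjf
  refine ⟨fun k => if j < (k : ℕ) then (h : ℂ) / (Complex.I * w jf) else 0, ?_⟩
  rw [comm_eq_sum, Finset.sum_eq_single jf]
  · have hj' : (jf : ℕ) + 1 < m := hj
    rw [dif_pos hj']
    have h1 : j < ((⟨(jf : ℕ) + 1, hj'⟩ : Fin m) : ℕ) := by simp [hjf]
    have h2 : ¬ j < (jf : ℕ) := by simp [hjf]
    rw [if_pos h1, if_neg h2]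
    have hwj : w jf ≠ 0 := hw jf hj'
    have hI : Complex.I ≠ 0 := Complex.I_ne_zero
    have hhc : (h : ℂ) ≠ 0 := by exact_mod_cast hh.ne'
    have : Complex.I / (h : ℂ) * w jf * ((h : ℂ) / (Complex.I * w jf) - 0) = 1 := by
      field_simp
      ring
    rw [this, one_smul, Sgen, dif_pos hj']
  · intro b _ hb
    by_cases hb' : (b : ℕ) + 1 < m
    · rw [dif_pos hb']
      have : (if j < ((⟨(b : ℕ) + 1, hb'⟩ : Fin m) : ℕ) then (h : ℂ) / (Complex.I * w jf) else 0)
          = (if j < (b : ℕ) then (h : ℂ) / (Complex.I * w jf) else 0) := by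
        have hne : (b : ℕ) ≠ j := fun hc => hb (Fin.ext hc)
        have hval : ((⟨(b : ℕ) + 1, hb'⟩ : Fin m) : ℕ) = (b : ℕ) + 1 := rfl
        by_cases hlt : j < (b : ℕ)
        · rw [if_pos hlt, if_pos (by rw [hval]; omega)]
        · rw [if_neg hlt, if_neg (by rw [hval]; omega)]
      rw [this, sub_self, mul_zero, zero_smul]
    · rw [dif_neg hb', zero_smul]
  · intro hc; exact absurd (Finset.mem_univ jf) hc


/-- For any choice of nonzero weights `ω`, the set of commutators `[D_ω, a_λ]`
equals the `ℂ`-linear span of `{E_{j, m+j+1} + E_{m+j+1, j} : 1 ≤ j ≤ m-1}`; in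
particular it is a linear subspace independent of `ω`. -/
theorem range_commutator_eq_span (m : ℕ) (hm : 2 ≤ m) (h : ℝ) (hh : 0 < h)
    (w : Fin m → ℂ) (hw : ∀ j : Fin m, (j : ℕ) + 1 < m → w j ≠ 0) :
    {X : Matrix (Fin m ⊕ Fin m) (Fin m ⊕ Fin m) ℂ |
        ∃ lam : Fin m → ℂ,
          X = DiracW m h w * aDiag lam - aDiag lam * DiracW m h w} =
      ↑(Submodule.span ℂ
        {X : Matrix (Fin m ⊕ Fin m) (Fin m ⊕ Fin m) ℂ |
          ∃ (j : ℕ) (hj : j + 1 < m),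
            X = Matrix.single
                  (Sum.inl ⟨j, Nat.lt_of_succ_lt hj⟩) (Sum.inr ⟨j + 1, hj⟩) (1 : ℂ)
              + Matrix.single
                  (Sum.inr ⟨j + 1, hj⟩) (Sum.inl ⟨j, Nat.lt_of_succ_lt hj⟩) (1 : ℂ)}) := by
  ext X
  simp only [Set.mem_setOf_eq, SetLike.mem_coe]
  constructor
  · rintro ⟨lam, rfl⟩
    rw [comm_eq_sum]
    refine Submodule.sum_mem _ fun j _ => Submodule.smul_mem _ _ ?_
    by_cases hj : (j : ℕ) + 1 < m
    · apply Submodule.subset_span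
      refine ⟨(j : ℕ), hj, ?_⟩
      rw [Sgen, dif_pos hj]
    · rw [Sgen, dif_neg hj]
      exact Submodule.zero_mem _
  · intro hX
    induction hX using Submodule.span_induction with
    | mem x hx =>
      obtain ⟨j, hj, rfl⟩ := hx
      exact gen_eq_comm m h hh w hw j hj
    | zero => exact ⟨0, by rw [aDiag_zero]; simp⟩
    | add x y _ _ hx hy =>
      obtain ⟨l1, rfl⟩ := hx
      obtain ⟨l2, rfl⟩ := hy
      refine ⟨l1 + l2, ?_⟩
      rw [aDiag_add]
      noncomm_ring
    | smul c x _ hx =>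
      obtain ⟨l, rfl⟩ := hx
      refine ⟨c • l, ?_⟩
      rw [aDiag_smul]
      rw [smul_sub, mul_smul_comm, smul_mul_assoc]
end
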